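/- arXiv:1805.10366 — 7 statements merged into one kernel-verified Lean document; each statement's English description precedes it below -/
import Mathlib

section
/- For every real ℓ > 0 there exists a set P of primes such that ∑_{p∈P} 1/p = ℓ and ∑_{p∈P} 1/√p < ∞. -/
/-!
Run the greedy algorithm on the primes `p₀ < p₁ < ⋯`: take `pₜ` whenever `1/pₜ` still fits
strictly below `ℓ`. Since `1/pₜ → 0` and `∑ 1/pₜ = ∞`, the running sum tends to `ℓ`.
By Bertrand's postulate `1/pₜ ≤ 2/pₜ₊₁`, so once some prime has been rejected the remainder
`rₜ = ℓ - sₜ` stays at most `2/pₜ`; each accepted `pₜ` then removes at least half of the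
remainder. As `1/pₜ < rₜ`, the accepted terms satisfy `1/√pₜ < √rₜ ≤ 4 (√rₜ - √rₜ₊₁)`,
which telescopes.
-/

open Filter Topology Finset

section Greedy

variable {a : ℕ → ℝ} {ℓ : ℝ}

noncomputable def greedySum (a : ℕ → ℝ) (ℓ : ℝ) : ℕ → ℝ
  | 0 => 0
  | t + 1 => greedySum a ℓ t + if greedySum a ℓ t + a t < ℓ then a t else 0

def greedySet (a : ℕ → ℝ) (ℓ : ℝ) : Set ℕ := {t | greedySum a ℓ t + a t < ℓ}

theorem mem_greedySet {t : ℕ} : t ∈ greedySet a ℓ ↔ greedySum a ℓ t + a t < ℓ := Iff.rfl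

theorem le_greedySum_add_of_notMem {t : ℕ} (ht : t ∉ greedySet a ℓ) :
    ℓ ≤ greedySum a ℓ t + a t :=
  not_lt.1 ht

theorem greedySum_succ (t : ℕ) :
    greedySum a ℓ (t + 1) = greedySum a ℓ t + (greedySet a ℓ).indicator a t := by
  simp only [greedySum, Set.indicator_apply, greedySet, Set.mem_ofPred_eq]

theorem greedySum_succ_of_mem {t : ℕ} (ht : t ∈ greedySet a ℓ) :
    greedySum a ℓ (t + 1) = greedySum a ℓ t + a t := by
  rw [greedySum_succ, Set.indicator_of_mem ht]

theorem greedySum_succ_of_notMem {t : ℕ} (ht : t ∉ greedySet a ℓ) :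
    greedySum a ℓ (t + 1) = greedySum a ℓ t := by
  rw [greedySum_succ, Set.indicator_of_notMem ht, add_zero]

theorem greedySum_eq_sum_range (n : ℕ) :
    greedySum a ℓ n = ∑ t ∈ range n, (greedySet a ℓ).indicator a t := by
  induction n with
  | zero => rfl
  | succ n ih => rw [greedySum_succ, ih, sum_range_succ]

theorem greedySum_lt (hℓ : 0 < ℓ) (n : ℕ) : greedySum a ℓ n < ℓ := by
  induction n with
  | zero => exact hℓ
  | succ n ih =>
    by_cases hn : n ∈ greedySet a ℓ
    · rwa [greedySum_succ_of_mem hn]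
    · rwa [greedySum_succ_of_notMem hn]

theorem greedySum_mono (ha : ∀ t, 0 ≤ a t) : Monotone (greedySum a ℓ) :=
  monotone_nat_of_le_succ fun t => by
    rw [greedySum_succ]
    exact le_add_of_nonneg_right (Set.indicator_nonneg (fun t _ => ha t) t)

theorem hasSum_indicator_greedySet (ha : ∀ t, 0 ≤ a t) (ha0 : Tendsto a atTop (𝓝 0))
    (hna : ¬ Summable a) (hℓ : 0 < ℓ) : HasSum ((greedySet a ℓ).indicator a) ℓ := by
  set f := (greedySet a ℓ).indicator a
  have hf : HasSum f (∑' t, f t) :=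
    (summable_of_sum_range_le (Set.indicator_nonneg fun t _ => ha t) fun n => by
      rw [← greedySum_eq_sum_range]; exact (greedySum_lt hℓ n).le).hasSum
  set L := ∑' t, f t
  have hsL : ∀ n, greedySum a ℓ n ≤ L := fun n => by
    rw [greedySum_eq_sum_range]
    exact sum_le_hasSum _ (fun t _ => Set.indicator_nonneg (fun t _ => ha t) t) hf
  have hLℓ : L ≤ ℓ := le_of_tendsto' hf.tendsto_sum_nat fun n => by
    rw [← greedySum_eq_sum_range]; exact (greedySum_lt hℓ n).le
  obtain hLeq | hlt := hLℓ.eq_or_lt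
  · rwa [← hLeq]
  -- If the limit `L` fell short of `ℓ`, every small enough `a t` would be accepted.
  have hfa : f =ᶠ[cofinite] a := by
    rw [Nat.cofinite_eq_atTop]
    filter_upwards [ha0.eventually_lt_const (sub_pos.2 hlt)] with t ht
    exact Set.indicator_of_mem (mem_greedySet.2 (by linarith [hsL t])) a
  exact absurd (hf.summable.congr_cofinite hfa) hna

theorem greedySet_infinite (ha : ∀ t, 0 ≤ a t) (ha0 : Tendsto a atTop (𝓝 0))
    (hna : ¬ Summable a) (hℓ : 0 < ℓ) : (greedySet a ℓ).Infinite := by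
  intro hfin
  obtain ⟨N, hN⟩ := hfin.bddAbove
  have hsum : HasSum ((greedySet a ℓ).indicator a) (greedySum a ℓ (N + 1)) := by
    rw [greedySum_eq_sum_range]
    refine hasSum_sum_of_ne_finset_zero fun t ht => Set.indicator_of_notMem (fun hmem => ?_) a
    exact ht (mem_range.2 (Nat.lt_succ_of_le (hN hmem)))
  exact (greedySum_lt hℓ (N + 1)).ne
    (hsum.unique (hasSum_indicator_greedySet ha ha0 hna hℓ))

theorem exists_notMem_greedySet (ha : ∀ t, 0 ≤ a t) (ha0 : Tendsto a atTop (𝓝 0))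
    (hna : ¬ Summable a) (hℓ : 0 < ℓ) : ∃ t, t ∉ greedySet a ℓ := by
  by_contra! hall
  have hsum := hasSum_indicator_greedySet ha ha0 hna hℓ
  rw [Set.eq_univ_of_forall hall, Set.indicator_univ] at hsum
  exact hna hsum.summable

theorem sub_greedySum_le_two_mul (ha2 : ∀ t, a t ≤ 2 * a (t + 1)) {t₀ : ℕ}
    (ht₀ : t₀ ∉ greedySet a ℓ) {t : ℕ} (ht : t₀ < t) : ℓ - greedySum a ℓ t ≤ 2 * a t := by
  induction t, ht using Nat.le_induction with
  | base =>
    have := le_greedySum_add_of_notMem ht₀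
    rw [greedySum_succ_of_notMem ht₀]
    linarith [ha2 t₀]
  | succ t _ ih =>
    have : ℓ - greedySum a ℓ (t + 1) ≤ a t := by
      by_cases ht : t ∈ greedySet a ℓ
      · rw [greedySum_succ_of_mem ht]; linarith
      · rw [greedySum_succ_of_notMem ht]; linarith [le_greedySum_add_of_notMem ht]
    linarith [ha2 t]

theorem sqrt_le_four_mul_sub_sqrt (ha2 : ∀ t, a t ≤ 2 * a (t + 1)) (hℓ : 0 < ℓ) {t₀ : ℕ}
    (ht₀ : t₀ ∉ greedySet a ℓ) {t : ℕ} (ht : t₀ < t) (hmem : t ∈ greedySet a ℓ) :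
    √(a t) ≤ 4 * (√(ℓ - greedySum a ℓ t) - √(ℓ - greedySum a ℓ (t + 1))) := by
  set r := ℓ - greedySum a ℓ t
  set r' := ℓ - greedySum a ℓ (t + 1)
  have hr' : r' = r - a t := by simp only [r, r', greedySum_succ_of_mem hmem]; ring
  have har : a t < r := by linarith [mem_greedySet.1 hmem]
  have hr'0 : 0 ≤ r' := sub_nonneg.2 (greedySum_lt hℓ _).le
  have hhalf : r' ≤ r / 2 := by linarith [sub_greedySum_le_two_mul ha2 ht₀ ht]
  have hsqrt : √(a t) ≤ √r := Real.sqrt_le_sqrt har.le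
  have hsq : (√r) ^ 2 = r := Real.sq_sqrt (by linarith)
  have hsq' : (√r') ^ 2 = r' := Real.sq_sqrt hr'0
  -- `r' ≤ r / 2` gives `4 √r' ≤ 3 √r`.
  nlinarith [Real.sqrt_nonneg r, Real.sqrt_nonneg r']

theorem summable_sub_succ_of_antitone {u : ℕ → ℝ} (hu : Antitone u) (hu0 : ∀ n, 0 ≤ u n) :
    Summable fun n => u n - u (n + 1) :=
  summable_of_sum_range_le (fun n => sub_nonneg.2 (hu n.le_succ)) fun n => by
    rw [sum_range_sub']; linarith [hu0 n]

theorem summable_indicator_sqrt_greedySet (ha : ∀ t, 0 ≤ a t) (ha0 : Tendsto a atTop (𝓝 0))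
    (hna : ¬ Summable a) (ha2 : ∀ t, a t ≤ 2 * a (t + 1)) (hℓ : 0 < ℓ) :
    Summable ((greedySet a ℓ).indicator fun t => √(a t)) := by
  obtain ⟨t₀, ht₀⟩ := exists_notMem_greedySet ha ha0 hna hℓ
  set u := fun t => √(ℓ - greedySum a ℓ t)
  have hu : Antitone u := fun m n hmn =>
    Real.sqrt_le_sqrt (sub_le_sub_left (greedySum_mono ha hmn) ℓ)
  refine ((summable_sub_succ_of_antitone hu fun n => Real.sqrt_nonneg _).mul_left 4)
    |>.of_norm_bounded_eventually_nat ?_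
  filter_upwards [eventually_gt_atTop t₀] with t ht
  rw [Real.norm_of_nonneg (Set.indicator_nonneg (fun t _ => Real.sqrt_nonneg _) t)]
  by_cases hmem : t ∈ greedySet a ℓ
  · rw [Set.indicator_of_mem hmem]
    exact sqrt_le_four_mul_sub_sqrt ha2 hℓ ht₀ ht hmem
  · rw [Set.indicator_of_notMem hmem]
    exact mul_nonneg zero_le_four (sub_nonneg.2 (hu t.le_succ))

end Greedy

section Primes

open Nat

theorem nth_prime_succ_le_two_mul (t : ℕ) : nth Nat.Prime (t + 1) ≤ 2 * nth Nat.Prime t := by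
  obtain ⟨p, hp, hlt, hle⟩ :=
    exists_prime_lt_and_le_two_mul (nth Nat.Prime t) (prime_nth_prime t).ne_zero
  by_contra! h
  exact hlt.not_ge (le_nth_of_lt_nth_succ (hle.trans_lt h) hp)

theorem one_div_nth_prime_le_two_mul (t : ℕ) :
    (1 : ℝ) / nth Nat.Prime t ≤ 2 * (1 / nth Nat.Prime (t + 1)) := by
  have hpos : (0 : ℝ) < nth Nat.Prime t := by exact_mod_cast (prime_nth_prime t).pos
  have hpos' : (0 : ℝ) < nth Nat.Prime (t + 1) := by exact_mod_cast (prime_nth_prime _).pos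
  rw [mul_one_div, div_le_div_iff₀ hpos hpos', one_mul]
  exact_mod_cast nth_prime_succ_le_two_mul t

theorem tendsto_one_div_nth_prime :
    Tendsto (fun t => (1 : ℝ) / nth Nat.Prime t) atTop (𝓝 0) :=
  (tendsto_const_div_atTop_nhds_zero_nat 1).comp
    (nth_strictMono infinite_setOfPred_prime).tendsto_atTop

theorem not_summable_one_div_nth_prime :
    ¬ Summable fun t => (1 : ℝ) / nth Nat.Prime t := by
  have hcomp : (fun t => (1 : ℝ) / nth Nat.Prime t) =
      {p | p.Prime}.indicator (fun n : ℕ => (1 : ℝ) / n) ∘ nth Nat.Prime := by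
    ext t
    exact (Set.indicator_of_mem (s := {p : ℕ | p.Prime}) (prime_nth_prime t)
      fun n : ℕ => (1 : ℝ) / n).symm
  rw [hcomp, (nth_strictMono infinite_setOfPred_prime).injective.summable_iff]
  · exact not_summable_one_div_on_primes
  · intro n hn
    rw [range_nth_of_infinite infinite_setOfPred_prime] at hn
    exact Set.indicator_of_notMem hn _

end Primes

theorem stmt_1 (ℓ : ℝ) (hℓ : 0 < ℓ) :
    ∃ P : Set ℕ, (∀ p ∈ P, p.Prime) ∧ P.Infinite ∧
      HasSum (fun p : P => (1 : ℝ) / (p : ℕ)) ℓ ∧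
      Summable (fun p : P => (1 : ℝ) / Real.sqrt (p : ℕ)) := by
  set a : ℕ → ℝ := fun t => 1 / Nat.nth Nat.Prime t
  have ha : ∀ t, 0 ≤ a t := fun t => by positivity
  set S := greedySet a ℓ
  have hS := greedySet_infinite ha tendsto_one_div_nth_prime not_summable_one_div_nth_prime hℓ
  have hinj : Function.Injective fun t : S => Nat.nth Nat.Prime t :=
    (Nat.nth_strictMono Nat.infinite_setOfPred_prime).injective.comp Subtype.val_injective
  refine ⟨Set.range fun t : S => Nat.nth Nat.Prime t, ?_, ?_, ?_, ?_⟩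
  · rintro _ ⟨t, rfl⟩
    exact Nat.prime_nth_prime t
  · have := hS.to_subtype
    exact Set.infinite_range_of_injective hinj
  · refine (hinj.hasSum_range_iff (f := fun n : ℕ => (1 : ℝ) / n)).2 ?_
    exact hasSum_subtype_iff_indicator.2
      (hasSum_indicator_greedySet ha tendsto_one_div_nth_prime not_summable_one_div_nth_prime hℓ)
  · have hsqrt : (fun t => √(a t)) = (fun n : ℕ => (1 : ℝ) / √n) ∘ Nat.nth Nat.Prime :=
      funext fun t => by simp only [a, Function.comp_apply, one_div, Real.sqrt_inv]
    have h := summable_indicator_sqrt_greedySet ha tendsto_one_div_nth_prime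
      not_summable_one_div_nth_prime one_div_nth_prime_le_two_mul hℓ
    rw [hsqrt] at h
    exact ((hinj.hasSum_range_iff (f := fun n : ℕ => (1 : ℝ) / √n)).2
      (summable_subtype_iff_indicator.2 h).hasSum).summable
end

section
/- Let (x_n) be a positive nonincreasing real sequence with ∑_n x_n = +∞, lim_{n→∞} x_n = 0, and L := liminf_{n→∞} x_{n+1}/x_n > 1/2. Then there exists θ ∈ (0,1) such that for every ℓ > 0 there is a strictly increasing sequence of indices (n_k) with ∑_k x_{n_k} = ℓ and x_{n_k} = O(θ^k). -/
open Filter Topology Finset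

/-!
Pick `c ∈ (1/2, 1)` below the liminf, so that `c * x m ≤ x (m + 1)` for `m ≥ N`, and choose the
indices greedily starting after `N`: the next index is the first one after the current index at
which `x` drops below the remainder `ρ = ℓ - (sum chosen so far)`. If the greedy choice skips an
index, the skipped term is at least `ρ`, so the chosen one is at least `c * ρ ≥ (1 - c) * ρ`. The
inequality `(1 - c) * ρₖ ≤ x (nₖ₊₁)` is exactly `ρₖ₊₁ ≤ c * ρₖ`, and once it holds it holds forever:
it rewrites as `(1 - c) * ρₖ₊₁ ≤ c * x (nₖ₊₁)`, which controls the next step also when no index is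
skipped. A skip must occur, for otherwise a tail of the divergent series would sum to at most `ℓ`.
So the remainders, which dominate the chosen terms, decay like `c ^ k`.
-/

noncomputable def nextIndexBelow (x : ℕ → ℝ) (p : ℕ) (ρ : ℝ) : ℕ :=
  sInf {m | p < m ∧ x m < ρ}

section NextIndexBelow

variable {x : ℕ → ℝ} {p m : ℕ} {ρ : ℝ}

theorem nextIndexBelow_spec (hx : Tendsto x atTop (𝓝 0)) (hρ : 0 < ρ) :
    p < nextIndexBelow x p ρ ∧ x (nextIndexBelow x p ρ) < ρ :=
  Nat.sInf_mem ((eventually_gt_atTop p).and (hx.eventually (gt_mem_nhds hρ))).exists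

theorem le_of_lt_nextIndexBelow (hpm : p < m) (hm : m < nextIndexBelow x p ρ) : ρ ≤ x m :=
  not_lt.mp fun hlt => Nat.notMem_of_lt_sInf hm ⟨hpm, hlt⟩

end NextIndexBelow

/-- The pairs (index, remainder) of the greedy algorithm aiming at the sum `ℓ` with indices
after `N`; the chosen indices are those of the states `k + 1`. -/
noncomputable def greedy (x : ℕ → ℝ) (N : ℕ) (ℓ : ℝ) : ℕ → ℕ × ℝ
  | 0 => (N, ℓ)
  | k + 1 =>
    (nextIndexBelow x (greedy x N ℓ k).1 (greedy x N ℓ k).2,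
      (greedy x N ℓ k).2 - x (nextIndexBelow x (greedy x N ℓ k).1 (greedy x N ℓ k).2))

noncomputable def greedyIdx (x : ℕ → ℝ) (N : ℕ) (ℓ : ℝ) (k : ℕ) : ℕ := (greedy x N ℓ k).1

noncomputable def greedyRem (x : ℕ → ℝ) (N : ℕ) (ℓ : ℝ) (k : ℕ) : ℝ := (greedy x N ℓ k).2

namespace Greedy

variable {x : ℕ → ℝ} {N : ℕ} {ℓ : ℝ} {k : ℕ}

theorem idx_zero : greedyIdx x N ℓ 0 = N := rfl

theorem rem_zero : greedyRem x N ℓ 0 = ℓ := rfl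

theorem idx_succ :
    greedyIdx x N ℓ (k + 1) = nextIndexBelow x (greedyIdx x N ℓ k) (greedyRem x N ℓ k) := rfl

theorem rem_succ :
    greedyRem x N ℓ (k + 1) = greedyRem x N ℓ k - x (greedyIdx x N ℓ (k + 1)) := rfl

theorem sum_eq_sub_rem (K : ℕ) :
    ∑ k ∈ range K, x (greedyIdx x N ℓ (k + 1)) = ℓ - greedyRem x N ℓ K := by
  induction K with
  | zero => simp [rem_zero]
  | succ K ih => rw [sum_range_succ, ih, rem_succ]; ring

theorem rem_le (hx0 : ∀ n, 0 ≤ x n) (k : ℕ) : greedyRem x N ℓ k ≤ ℓ := by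
  induction k with
  | zero => exact le_rfl
  | succ k ih => rw [rem_succ]; linarith [hx0 (greedyIdx x N ℓ (k + 1))]

variable (hx : Tendsto x atTop (𝓝 0)) (hℓ : 0 < ℓ)
include hx hℓ

theorem rem_pos : ∀ k, 0 < greedyRem x N ℓ k
  | 0 => hℓ
  | k + 1 => by
    rw [rem_succ, idx_succ, sub_pos]
    exact (nextIndexBelow_spec hx (rem_pos k)).2

theorem idx_lt_succ (k : ℕ) : greedyIdx x N ℓ k < greedyIdx x N ℓ (k + 1) :=
  (nextIndexBelow_spec hx (rem_pos hx hℓ k)).1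

theorem lt_rem (k : ℕ) : x (greedyIdx x N ℓ (k + 1)) < greedyRem x N ℓ k :=
  (nextIndexBelow_spec hx (rem_pos hx hℓ k)).2

theorem idx_strictMono : StrictMono (greedyIdx x N ℓ) :=
  strictMono_nat_of_lt_succ (idx_lt_succ hx hℓ)

theorem le_idx (k : ℕ) : N ≤ greedyIdx x N ℓ k :=
  idx_zero (x := x) (ℓ := ℓ) ▸ (idx_strictMono hx hℓ).monotone k.zero_le

theorem exists_skip (hx0 : ∀ n, 0 ≤ x n) (hdiv : ¬ Summable x) :
    ∃ k, greedyIdx x N ℓ k + 1 < greedyIdx x N ℓ (k + 1) := by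
  by_contra! hno
  have hidx : ∀ k, greedyIdx x N ℓ k = N + k := fun k => by
    induction k with
    | zero => rfl
    | succ k ih => have := idx_lt_succ hx hℓ (N := N) k; have := hno k; omega
  refine hdiv ((summable_nat_add_iff (N + 1)).mp (summable_of_sum_range_le (c := ℓ)
    (fun _ => hx0 _) fun K => ?_))
  calc ∑ i ∈ range K, x (i + (N + 1))
      = ∑ i ∈ range K, x (greedyIdx x N ℓ (i + 1)) :=
        sum_congr rfl fun i _ => by rw [hidx]; congr 1; omega
    _ = ℓ - greedyRem x N ℓ K := sum_eq_sub_rem K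
    _ ≤ ℓ := by linarith [rem_pos hx hℓ (N := N) K]

section Ratio

variable {c : ℝ} (hc : 1 / 2 ≤ c) (hN : ∀ m, N ≤ m → c * x m ≤ x (m + 1))
include hc hN

theorem one_sub_mul_rem_le_of_skip (hskip : greedyIdx x N ℓ k + 1 < greedyIdx x N ℓ (k + 1)) :
    (1 - c) * greedyRem x N ℓ k ≤ x (greedyIdx x N ℓ (k + 1)) := by
  set m := greedyIdx x N ℓ (k + 1) - 1
  have hm : m + 1 = greedyIdx x N ℓ (k + 1) := by omega
  have hskipped : greedyRem x N ℓ k ≤ x m :=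
    le_of_lt_nextIndexBelow (p := greedyIdx x N ℓ k) (by omega) (by rw [← idx_succ]; omega)
  calc (1 - c) * greedyRem x N ℓ k ≤ c * greedyRem x N ℓ k := 
        mul_le_mul_of_nonneg_right (by linarith) (rem_pos hx hℓ k).le
    _ ≤ c * x m := by gcongr
    _ ≤ x (m + 1) := hN m ((le_idx hx hℓ k).trans (by omega))
    _ = _ := by rw [hm]

theorem one_sub_mul_rem_le_succ
    (h : (1 - c) * greedyRem x N ℓ k ≤ x (greedyIdx x N ℓ (k + 1))) :
    (1 - c) * greedyRem x N ℓ (k + 1) ≤ x (greedyIdx x N ℓ (k + 1 + 1)) := by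
  have hstep := idx_lt_succ hx hℓ (N := N) (k + 1)
  rcases Nat.lt_or_ge (greedyIdx x N ℓ (k + 1) + 1) (greedyIdx x N ℓ (k + 1 + 1))
    with hskip | hnext
  · exact one_sub_mul_rem_le_of_skip hx hℓ hc hN hskip
  · have hnext : greedyIdx x N ℓ (k + 1 + 1) = greedyIdx x N ℓ (k + 1) + 1 := by omega
    have := hN _ (le_idx hx hℓ (k + 1))
    rw [hnext, rem_succ]
    linarith

end Ratio

end Greedy

theorem exists_le_mul_pow_of_eventually_le_mul {a : ℕ → ℝ} {c M : ℝ} (hc0 : 0 < c)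
    (hc1 : c ≤ 1) (hM0 : 0 ≤ M) (hM : ∀ k, a k ≤ M) (h : ∀ᶠ k in atTop, a (k + 1) ≤ c * a k) :
    ∃ C, ∀ k, a k ≤ C * c ^ k := by
  obtain ⟨k₀, hk₀⟩ := h.exists_forall_of_atTop
  have hM_le : ∀ k ≤ k₀, M ≤ M / c ^ k₀ * c ^ k := fun k hk => by
    rw [div_mul_eq_mul_div, le_div_iff₀ (by positivity)]
    exact mul_le_mul_of_nonneg_left (pow_le_pow_of_le_one hc0.le hc1 hk) hM0
  refine ⟨M / c ^ k₀, fun k => ?_⟩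
  induction k with
  | zero => exact (hM 0).trans (hM_le 0 k₀.zero_le)
  | succ k ih =>
    by_cases hk : k₀ ≤ k
    · calc a (k + 1) ≤ c * a k := hk₀ k hk
        _ ≤ c * (M / c ^ k₀ * c ^ k) := by gcongr
        _ = M / c ^ k₀ * c ^ (k + 1) := by ring
    · exact (hM _).trans (hM_le _ (by omega))

open Greedy in
theorem exists_strictMono_hasSum_le_mul_pow {x : ℕ → ℝ} (hx0 : ∀ n, 0 ≤ x n)
    (hdiv : ¬ Summable x) (hx : Tendsto x atTop (𝓝 0)) {c : ℝ} (hc : 1 / 2 ≤ c) (hc1 : c < 1)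
    {N : ℕ} (hN : ∀ m, N ≤ m → c * x m ≤ x (m + 1)) {ℓ : ℝ} (hℓ : 0 < ℓ) :
    ∃ n : ℕ → ℕ, StrictMono n ∧ HasSum (fun k => x (n k)) ℓ ∧ ∃ C, ∀ k, x (n k) ≤ C * c ^ k := by
  have hc0 : 0 < c := by linarith
  obtain ⟨k₀, hskip⟩ := exists_skip hx hℓ (N := N) hx0 hdiv
  have hcontract : ∀ k ≥ k₀, (1 - c) * greedyRem x N ℓ k ≤ x (greedyIdx x N ℓ (k + 1)) := by
    exact Nat.le_induction (one_sub_mul_rem_le_of_skip hx hℓ hc hN hskip)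
      fun k _ ih => one_sub_mul_rem_le_succ hx hℓ hc hN ih
  obtain ⟨C, hC⟩ := exists_le_mul_pow_of_eventually_le_mul hc0 hc1.le hℓ.le
    (rem_le hx0) (eventually_atTop.mpr ⟨k₀, fun k hk => by
      have := hcontract k hk
      rw [rem_succ]
      linarith⟩)
  have hrem : Tendsto (greedyRem x N ℓ) atTop (𝓝 0) :=
    squeeze_zero (fun k => (rem_pos hx hℓ k).le) hC
      (by simpa using (tendsto_pow_atTop_nhds_zero_of_lt_one hc0.le hc1).const_mul C)
  refine ⟨fun k => greedyIdx x N ℓ (k + 1),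
    strictMono_nat_of_lt_succ fun k => idx_lt_succ hx hℓ (k + 1),
    ?_, C, fun k => (lt_rem hx hℓ k).le.trans (hC k)⟩
  rw [hasSum_iff_tendsto_nat_of_nonneg (fun k => hx0 _)]
  simpa [sum_eq_sub_rem] using tendsto_const_nhds.sub hrem

theorem exists_mul_le_succ_of_half_lt_liminf {x : ℕ → ℝ} (hpos : ∀ n, 0 < x n)
    (h : (1 : ℝ) / 2 < liminf (fun n => x (n + 1) / x n) atTop) :
    ∃ c, 1 / 2 < c ∧ c < 1 ∧ ∃ N, ∀ m, N ≤ m → c * x m ≤ x (m + 1) := by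
  obtain ⟨c, hc, hcl⟩ := exists_between (lt_min h one_half_lt_one)
  have hbdd : IsBoundedUnder (· ≥ ·) atTop (fun n => x (n + 1) / x n) :=
    isBoundedUnder_of ⟨0, fun n => (div_pos (hpos _) (hpos _)).le⟩
  obtain ⟨N, hN⟩ :=
    (eventually_lt_of_lt_liminf (hcl.trans_le (min_le_left _ _)) hbdd).exists_forall_of_atTop
  exact ⟨c, hc, hcl.trans_le (min_le_right _ _), N,
    fun m hm => ((lt_div_iff₀ (hpos m)).mp (hN m hm)).le⟩

theorem stmt_2_general (x : ℕ → ℝ) (hpos : ∀ n, 0 < x n)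
    (hdiv : ¬ Summable x) (hlim : Tendsto x atTop (𝓝 0))
    (hliminf : (1 : ℝ) / 2 < liminf (fun n => x (n + 1) / x n) atTop) :
    ∃ θ : ℝ, θ ∈ Set.Ioo (0 : ℝ) 1 ∧
      ∀ ℓ : ℝ, 0 < ℓ → ∃ n : ℕ → ℕ, StrictMono n ∧
        HasSum (fun k => x (n k)) ℓ ∧
        ∃ C : ℝ, ∀ k, x (n k) ≤ C * θ ^ k := by
  obtain ⟨c, hc, hc1, N, hN⟩ := exists_mul_le_succ_of_half_lt_liminf hpos hliminf
  exact ⟨c, ⟨by linarith, hc1⟩, fun ℓ hℓ =>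
    exists_strictMono_hasSum_le_mul_pow (fun n => (hpos n).le) hdiv hlim hc.le hc1 hN hℓ⟩

theorem stmt_2 (x : ℕ → ℝ) (hpos : ∀ n, 0 < x n) (hanti : Antitone x)
    (hdiv : ¬ Summable x) (hlim : Tendsto x atTop (𝓝 0))
    (hliminf : (1 : ℝ) / 2 < liminf (fun n => x (n + 1) / x n) atTop) :
    ∃ θ : ℝ, θ ∈ Set.Ioo (0 : ℝ) 1 ∧
      ∀ ℓ : ℝ, 0 < ℓ → ∃ n : ℕ → ℕ, StrictMono n ∧
        HasSum (fun k => x (n k)) ℓ ∧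
        ∃ C : ℝ, ∀ k, x (n k) ≤ C * θ ^ k :=
  stmt_2_general x hpos hdiv hlim hliminf
end

section
/- Let (x_n) be a positive nonincreasing real sequence with ∑_n x_n = +∞, lim_{n→∞} x_n = 0, and L := liminf_{n→∞} x_{n+1}/x_n > (√5 − 1)/2. Then for each ℓ > 0 and each ε > 0 there exists a subsequence (x_{n_k}) with ∑_k x_{n_k} = ℓ and x_{n_k} = O((1 + ε − L)^{k/2}). -/
open Filter Topology

set_option maxHeartbeats 1000000 in
theorem stmt_3 (x : ℕ → ℝ) (hpos : ∀ n, 0 < x n) (hanti : Antitone x)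
    (hdiv : ¬ Summable x) (hlim : Tendsto x atTop (𝓝 0))
    (L : ℝ) (hL : L = liminf (fun n => x (n + 1) / x n) atTop)
    (hLgt : (Real.sqrt 5 - 1) / 2 < L) :
    ∀ ℓ : ℝ, 0 < ℓ → ∀ ε : ℝ, 0 < ε → ∃ n : ℕ → ℕ, StrictMono n ∧
      HasSum (fun k => x (n k)) ℓ ∧
      ∃ C : ℝ, ∀ k, x (n k) ≤ C * (1 + ε - L) ^ ((k : ℝ) / 2) := by
  intro ℓ hℓ ε hε
  classical
  -- basic facts about L
  have hbdd : IsBoundedUnder (· ≥ ·) atTop (fun n => x (n + 1) / x n) :=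
    ⟨0, eventually_map.mpr (Eventually.of_forall fun p => div_nonneg (hpos _).le (hpos _).le)⟩
  have hLle1 : L ≤ 1 := by
    rw [hL]
    refine liminf_le_of_frequently_le (Filter.Frequently.of_forall fun p => ?_) hbdd
    exact div_le_one_of_le₀ (hanti (Nat.le_succ p)) (hpos p).le
  have h5 : Real.sqrt 5 ^ 2 = 5 := Real.sq_sqrt (by norm_num)
  have h5' : (0:ℝ) ≤ Real.sqrt 5 := Real.sqrt_nonneg 5
  have hg : 1 < L ^ 2 + L := by nlinarith [sq_nonneg (2 * L + 1 - Real.sqrt 5)]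
  have hLpos : (0:ℝ) < L := by nlinarith
  have hLhalf : (1:ℝ)/2 < L := by nlinarith
  -- the square root β of 1 + ε - L
  have hKpos : (0:ℝ) < 1 + ε - L := by linarith
  set β := Real.sqrt (1 + ε - L) with hβdef
  have hβpos : 0 < β := Real.sqrt_pos.mpr hKpos
  have hβsq : β ^ 2 = 1 + ε - L := Real.sq_sqrt hKpos.le
  -- choose c
  have hLβ : 1 < L * (1 + β) := by
    have h1 : (1 - L) ^ 2 < L ^ 2 * β ^ 2 := by rw [hβsq]; nlinarith
    nlinarith [mul_pos hLpos hβpos]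
  set m := max (1 / (1 + β)) (1/2 : ℝ) with hmdef
  have hmL : m < L := by
    apply max_lt _ hLhalf
    rw [div_lt_iff₀ (by linarith : (0:ℝ) < 1 + β)]
    linarith [mul_comm L (1 + β)]
  set c := (m + L) / 2 with hcdef
  have hmhalf : (1:ℝ)/2 ≤ m := le_max_right _ _
  have hc2 : (1:ℝ)/2 < c := by rw [hcdef]; linarith
  have hcL : c < L := by rw [hcdef]; linarith
  have hc1 : c < 1 := lt_of_lt_of_le hcL hLle1
  have hc0 : (0:ℝ) < c := by linarith
  have hcβ : 1 < c * (1 + β) := by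
    have h1 : 1 / (1 + β) ≤ m := le_max_left _ _
    have h2 : 1 / (1 + β) < c := lt_of_le_of_lt h1 (by rw [hcdef]; linarith)
    rw [div_lt_iff₀ (by linarith : (0:ℝ) < 1 + β)] at h2
    linarith [mul_comm c (1 + β)]
  set α := (1 - c) / c with hαdef
  have hα0 : 0 < α := div_pos (by linarith) hc0
  have hα1 : α < 1 := by rw [hαdef, div_lt_one hc0]; linarith
  have hαβ : α < β := by
    rw [hαdef, div_lt_iff₀ hc0]
    nlinarith
  have hαc : α * (1 - c) ≤ c := by
    rw [hαdef, div_mul_eq_mul_div, div_le_iff₀ hc0]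
    nlinarith
  -- eventual ratio bound
  have hev : ∀ᶠ p in atTop, c < x (p + 1) / x p := by
    have : c < liminf (fun n => x (n + 1) / x n) atTop := hL ▸ hcL
    exact eventually_lt_of_lt_liminf this hbdd
  obtain ⟨N, hN⟩ := eventually_atTop.mp hev
  have hrat : ∀ p, N ≤ p → c * x p < x (p + 1) := by
    intro p hp
    have := hN p hp
    rwa [lt_div_iff₀ (hpos p)] at this
  -- existence for the greedy step
  have hfind : ∀ (q : ℕ) (s : ℝ), 0 < s → ∃ p, q < p ∧ x p < s := by
    intro q s hs
    obtain ⟨M, hM⟩ := eventually_atTop.mp (hlim.eventually (gt_mem_nhds hs))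
    exact ⟨max (q + 1) M, lt_of_lt_of_le (Nat.lt_succ_self q) (le_max_left _ _),
      hM _ (le_max_right _ _)⟩
  -- the greedy construction
  set step : ℕ × {s : ℝ // 0 < s} → ℕ × {s : ℝ // 0 < s} := fun q =>
    ⟨Nat.find (hfind q.1 q.2.1 q.2.2),
     ⟨q.2.1 - x (Nat.find (hfind q.1 q.2.1 q.2.2)),
      sub_pos.mpr (Nat.find_spec (hfind q.1 q.2.1 q.2.2)).2⟩⟩ with hstepdef
  set a : ℕ → ℕ × {s : ℝ // 0 < s} := fun k => step^[k + 1] (N, ⟨ℓ, hℓ⟩) with hadef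
  set n : ℕ → ℕ := fun k => (a k).1 with hndef
  set r : ℕ → ℝ := fun k => (a k).2.1 with hrdef
  have hrpos : ∀ k, 0 < r k := fun k => (a k).2.2
  have hasucc : ∀ k, a (k + 1) = step (a k) := fun k =>
    Function.iterate_succ_apply' step (k + 1) _
  have hn0 : n 0 = Nat.find (hfind N ℓ hℓ) := rfl
  have hr0 : r 0 = ℓ - x (n 0) := rfl
  have hnsucc : ∀ k, n (k + 1) = Nat.find (hfind (n k) (r k) (hrpos k)) := by
    intro k
    show (a (k + 1)).1 = _
    rw [hasucc k]
  have hrsucc : ∀ k, r (k + 1) = r k - x (n (k + 1)) := by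
    intro k
    show (a (k + 1)).2.1 = _
    rw [hasucc k, hnsucc k]
  have hspec : ∀ k, n k < n (k + 1) ∧ x (n (k + 1)) < r k := by
    intro k
    rw [hnsucc k]
    exact Nat.find_spec (hfind (n k) (r k) (hrpos k))
  have hmin : ∀ k p, p < n (k + 1) → n k < p → r k ≤ x p := by
    intro k p hp hp2
    rw [hnsucc k] at hp
    have := Nat.find_min (hfind (n k) (r k) (hrpos k)) hp
    push_neg at this
    exact this hp2
  have hspec0 : N < n 0 ∧ x (n 0) < ℓ := by
    rw [hn0]; exact Nat.find_spec (hfind N ℓ hℓ)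
  have hNn : ∀ k, N < n k := by
    intro k
    induction k with
    | zero => exact hspec0.1
    | succ k ih => exact lt_trans ih (hspec k).1
  have hmono : StrictMono n := strictMono_nat_of_lt_succ fun k => (hspec k).1
  -- Case A: if the greedy skips an index, the invariant holds
  have hcaseA : ∀ k, n k + 1 < n (k + 1) → r (k + 1) ≤ α * x (n (k + 1)) := by
    intro k hk
    have hp : r k ≤ x (n (k + 1) - 1) :=
      hmin k _ (by omega) (by omega)
    have h4 : c * x (n (k + 1) - 1) < x (n (k + 1)) := by
      have h := hrat (n (k + 1) - 1) (by have := hNn k; omega)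
      rwa [show n (k + 1) - 1 + 1 = n (k + 1) by omega] at h
    have h5 : c * r k < x (n (k + 1)) :=
      lt_of_le_of_lt (by nlinarith) h4
    rw [hrsucc k, hαdef, div_mul_eq_mul_div, le_div_iff₀ hc0]
    nlinarith
  -- Case B: consecutive index, invariant preserved
  have hcaseB : ∀ k, n (k + 1) = n k + 1 → r k ≤ α * x (n k) →
      r (k + 1) ≤ α * x (n (k + 1)) := by
    intro k hk hinv
    have h4 : c * x (n k) < x (n (k + 1)) := by
      rw [hk]; exact hrat (n k) (hNn k).le
    have hx' : 0 < x (n (k + 1)) := hpos _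
    rw [hrsucc k]
    nlinarith [mul_le_mul_of_nonneg_left h4.le hα0.le,
      mul_le_mul_of_nonneg_left hinv hc0.le,
      mul_le_mul_of_nonneg_left hαc hx'.le]
  -- the invariant eventually holds
  obtain ⟨K₀, hK₀⟩ : ∃ k, r k ≤ α * x (n k) := by
    by_contra h
    push_neg at h
    have hstep1 : ∀ k, n (k + 1) = n k + 1 := by
      intro k
      by_contra hne
      have h2 : n k + 1 < n (k + 1) := by
        have := (hspec k).1; omega
      exact absurd (hcaseA k h2) (not_le.mpr (h (k + 1)))
    have hnk : ∀ k, n k = n 0 + k := by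
      intro k
      induction k with
      | zero => rfl
      | succ k ih => rw [hstep1 k, ih]; omega
    have hr_eq : ∀ k, r k = r 0 - ∑ j ∈ Finset.range k, x (n (j + 1)) := by
      intro k
      induction k with
      | zero => simp
      | succ k ih => rw [Finset.sum_range_succ, hrsucc k, ih]; ring
    have hsum : ∀ k, ∑ j ∈ Finset.range k, x (j + (n 0 + 1)) ≤ ℓ := by
      intro k
      have h1 := hrpos k
      rw [hr_eq k] at h1
      have h2 : ∑ j ∈ Finset.range k, x (n (j + 1))
          = ∑ j ∈ Finset.range k, x (j + (n 0 + 1)) :=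
        Finset.sum_congr rfl fun j _ => congrArg x (by rw [hnk (j + 1)]; omega)
      have h3 : r 0 ≤ ℓ := by rw [hr0]; linarith [hpos (n 0)]
      rw [h2] at h1
      linarith
    have hsummable : Summable (fun j => x (j + (n 0 + 1))) :=
      summable_of_sum_range_le (fun j => (hpos _).le) hsum
    exact hdiv ((summable_nat_add_iff (n 0 + 1)).mp hsummable)
  have hinv : ∀ k, K₀ ≤ k → r k ≤ α * x (n k) := by
    intro k hk
    induction k, hk using Nat.le_induction with
    | base => exact hK₀
    | succ k hk ih =>
      rcases eq_or_lt_of_le (Nat.succ_le_of_lt (hspec k).1) with h | h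
      · exact hcaseB k h.symm ih
      · exact hcaseA k h
  -- geometric decay of the remainder
  have hdec : ∀ j, r (K₀ + j) ≤ α ^ j * r K₀ := by
    intro j
    induction j with
    | zero => simp
    | succ j ih =>
      have h1 : r (K₀ + j + 1) ≤ α * x (n (K₀ + j + 1)) := hinv _ (by omega)
      have h2 : x (n (K₀ + j + 1)) < r (K₀ + j) := (hspec (K₀ + j)).2
      have h3 : r (K₀ + (j + 1)) = r (K₀ + j + 1) := by rw [Nat.add_succ]
      rw [h3]
      calc r (K₀ + j + 1) ≤ α * x (n (K₀ + j + 1)) := h1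
        _ ≤ α * r (K₀ + j) := mul_le_mul_of_nonneg_left h2.le hα0.le
        _ ≤ α * (α ^ j * r K₀) := mul_le_mul_of_nonneg_left ih hα0.le
        _ = α ^ (j + 1) * r K₀ := by ring
  have hr_tend : Tendsto r atTop (𝓝 0) := by
    have hgeo : Tendsto (fun j => α ^ j * r K₀) atTop (𝓝 0) := by
      have := (tendsto_pow_atTop_nhds_zero_of_lt_one hα0.le hα1).mul_const (r K₀)
      simpa using this
    have h1 : Tendsto (fun j => r (K₀ + j)) atTop (𝓝 0) :=
      squeeze_zero (fun j => (hrpos _).le) hdec hgeo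
    have h2 : Tendsto (fun j => r (j + K₀)) atTop (𝓝 0) := by
      simpa [Nat.add_comm] using h1
    exact (tendsto_add_atTop_iff_nat K₀).mp h2
  -- partial sums
  have hpart : ∀ k, ∑ j ∈ Finset.range (k + 1), x (n j) = ℓ - r k := by
    intro k
    induction k with
    | zero => simp [hr0]
    | succ k ih => rw [Finset.sum_range_succ, ih, hrsucc k]; ring
  have hsummable : Summable (fun k => x (n k)) := by
    apply summable_of_sum_range_le (fun k => (hpos _).le)
    intro k
    cases k with
    | zero => simpa using hℓ.le
    | succ k => rw [hpart k]; linarith [hrpos k]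
  have hsum_tend : Tendsto (fun k => ∑ j ∈ Finset.range k, x (n j)) atTop (𝓝 ℓ) := by
    have h1 : Tendsto (fun k => ∑ j ∈ Finset.range (k + 1), x (n j)) atTop (𝓝 ℓ) := by
      have heq : (fun k => ∑ j ∈ Finset.range (k + 1), x (n j)) = fun k => ℓ - r k :=
        funext hpart
      rw [heq]
      simpa using tendsto_const_nhds.sub hr_tend
    exact (tendsto_add_atTop_iff_nat 1).mp h1
  have htsum : HasSum (fun k => x (n k)) ℓ := by
    have h1 := hsummable.hasSum
    have h2 := hsummable.hasSum.tendsto_sum_nat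
    rwa [tendsto_nhds_unique h2 hsum_tend] at h1
  -- the geometric bound
  set D := r K₀ / β ^ (K₀ + 1) with hDdef
  have hD : 0 < D := div_pos (hrpos _) (pow_pos hβpos _)
  have hbound1 : ∀ j, x (n (K₀ + 1 + j)) ≤ D * β ^ (K₀ + 1 + j) := by
    intro j
    have h1 : x (n (K₀ + j + 1)) < r (K₀ + j) := (hspec (K₀ + j)).2
    have h2 := hdec j
    have h3 : α ^ j ≤ β ^ j := pow_le_pow_left₀ hα0.le hαβ.le j
    have h4 : D * β ^ (K₀ + 1 + j) = β ^ j * r K₀ := by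
      rw [hDdef, pow_add]
      field_simp
      ring
    have h6 : n (K₀ + 1 + j) = n (K₀ + j + 1) := by
      rw [show K₀ + 1 + j = K₀ + j + 1 by omega]
    rw [h6, h4]
    nlinarith [hrpos K₀]
  set C := D + ∑ j ∈ Finset.range (K₀ + 1), x (n j) / β ^ j with hCdef
  have hsum_nonneg : 0 ≤ ∑ j ∈ Finset.range (K₀ + 1), x (n j) / β ^ j :=
    Finset.sum_nonneg fun j _ => div_nonneg (hpos _).le (pow_pos hβpos _).le
  have hbound : ∀ k, x (n k) ≤ C * β ^ k := by
    intro k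
    rcases le_or_gt k K₀ with hk | hk
    · have h1 : x (n k) / β ^ k ≤ ∑ j ∈ Finset.range (K₀ + 1), x (n j) / β ^ j :=
        Finset.single_le_sum (f := fun j => x (n j) / β ^ j)
          (fun j _ => div_nonneg (hpos _).le (pow_pos hβpos _).le)
          (Finset.mem_range.mpr (by omega))
      have h2 : x (n k) / β ^ k ≤ C := le_trans h1 (by rw [hCdef]; linarith)
      calc x (n k) = (x (n k) / β ^ k) * β ^ k := by field_simp
        _ ≤ C * β ^ k := mul_le_mul_of_nonneg_right h2 (pow_pos hβpos _).le
    · obtain ⟨j, hj⟩ : ∃ j, k = K₀ + 1 + j := ⟨k - (K₀ + 1), by omega⟩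
      rw [hj]
      refine le_trans (hbound1 j) (mul_le_mul_of_nonneg_right ?_ (pow_pos hβpos _).le)
      rw [hCdef]; linarith
  refine ⟨n, hmono, htsum, C, fun k => ?_⟩
  have hrw : (1 + ε - L) ^ ((k : ℝ) / 2) = β ^ k := by
    rw [show ((k : ℝ) / 2) = (1 / 2 : ℝ) * (k : ℝ) by ring,
      Real.rpow_mul hKpos.le, ← Real.sqrt_eq_rpow, ← hβdef, Real.rpow_natCast]
  rw [hrw]
  exact hbound k
end

section
/- Let (x_n) be a positive nonincreasing real sequence with ∑_n x_n = +∞, lim_{n→∞} x_n = 0, and lim_{n→∞} x_{n+1}/x_n = 1. Then for each ℓ > 0 and each θ > 0 there exists a subsequence (x_{n_k}) with ∑_k x_{n_k} = ℓ and x_{n_k} = O(θ^k). -/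
open Filter Topology

open Classical in
/-- least index `m ≥ b` with `x m ≤ c * r` (junk value `b` if none exists). -/
noncomputable def s4pick (x : ℕ → ℝ) (c r : ℝ) (b : ℕ) : ℕ :=
  if h : ∃ m, b ≤ m ∧ x m ≤ c * r then Nat.find h else b

/-- greedy sequence: first component the chosen index, second the remainder after it. -/
noncomputable def s4seq (x : ℕ → ℝ) (c ℓ : ℝ) (N : ℕ) : ℕ → ℕ × ℝ
  | 0 => (s4pick x c ℓ N, ℓ - x (s4pick x c ℓ N))
  | k+1 =>
      let p := s4seq x c ℓ N k
      (s4pick x c p.2 (p.1+1), p.2 - x (s4pick x c p.2 (p.1+1)))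

open Classical in
theorem s4pick_spec {x : ℕ → ℝ} {c r : ℝ} {b : ℕ}
    (h : ∃ m, b ≤ m ∧ x m ≤ c * r) :
    b ≤ s4pick x c r b ∧ x (s4pick x c r b) ≤ c * r := by
  rw [s4pick, dif_pos h]
  exact Nat.find_spec h

open Classical in
theorem s4pick_min {x : ℕ → ℝ} {c r : ℝ} {b : ℕ}
    (h : ∃ m, b ≤ m ∧ x m ≤ c * r) {m : ℕ} (hbm : b ≤ m)
    (hm : m < s4pick x c r b) : c * r < x m := by
  rw [s4pick, dif_pos h] at hm
  have := Nat.find_min h hm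
  push_neg at this
  exact this hbm

set_option maxHeartbeats 1000000 in
theorem stmt_4 (x : ℕ → ℝ) (hpos : ∀ n, 0 < x n) (hanti : Antitone x)
    (hdiv : ¬ Summable x) (hlim : Tendsto x atTop (𝓝 0))
    (hratio : Tendsto (fun n => x (n + 1) / x n) atTop (𝓝 1)) :
    ∀ ℓ : ℝ, 0 < ℓ → ∀ θ : ℝ, 0 < θ → ∃ n : ℕ → ℕ, StrictMono n ∧
      HasSum (fun k => x (n k)) ℓ ∧
      ∃ C : ℝ, ∀ k, x (n k) ≤ C * θ ^ k := by
  intro ℓ hℓ θ hθ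
  classical
  set c : ℝ := 1 - min θ 1 / 8 with hcdef
  have hmθ : 0 < min θ 1 := lt_min hθ one_pos
  have hm1 : min θ 1 ≤ 1 := min_le_right _ _
  have hmθ' : min θ 1 ≤ θ := min_le_left _ _
  have hc0 : (7:ℝ)/8 ≤ c := by rw [hcdef]; linarith
  have hc1 : c < 1 := by rw [hcdef]; linarith
  have hqθ' : 1 - c ^ 2 ≤ θ := by
    have h : 1 - c ^ 2 = (1 - c) * (1 + c) := by ring
    rw [h, hcdef]; nlinarith
  clear hcdef
  clear_value c
  have hcpos : 0 < c := lt_of_lt_of_le (by norm_num) hc0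
  have hc2 : (1:ℝ)/2 < c ^ 2 := by nlinarith
  -- the contraction ratio
  set q : ℝ := 1 - c ^ 2 with hqdef
  have hq0 : 0 ≤ q := by nlinarith
  have hq1 : q < 1 := by nlinarith
  have hqθ : q ≤ θ := hqθ'
  clear_value q
  -- ratio bound threshold
  obtain ⟨N, hN⟩ : ∃ N, ∀ m, N ≤ m → c * x m < x (m + 1) := by
    have h1 : ∀ᶠ m in atTop, c < x (m + 1) / x m :=
      hratio.eventually (eventually_gt_nhds hc1)
    obtain ⟨N, hN⟩ := eventually_atTop.mp h1
    exact ⟨N, fun m hm => (lt_div_iff₀ (hpos m)).mp (hN m hm)⟩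
  -- existence used by the greedy picker
  have hex : ∀ r : ℝ, 0 < r → ∀ b : ℕ, ∃ m, b ≤ m ∧ x m ≤ c * r := by
    intro r hr b
    have h1 : ∀ᶠ m in atTop, x m < c * r :=
      hlim.eventually (eventually_lt_nhds (by positivity))
    obtain ⟨m, hm1, hm2⟩ := ((eventually_ge_atTop b).and h1).exists
    exact ⟨m, hm1, hm2.le⟩
  -- the sequences
  set n : ℕ → ℕ := fun k => (s4seq x c ℓ N k).1 with hndef
  set s : ℕ → ℝ := fun k => Nat.rec ℓ (fun k' _ => (s4seq x c ℓ N k').2) k with hsdef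
  set bf : ℕ → ℕ := fun k => Nat.rec N (fun k' _ => n k' + 1) k with hbfdef
  have hs0 : s 0 = ℓ := rfl
  have hsucc : ∀ k, s (k + 1) = s k - x (n k) := by
    intro k; cases k with
    | zero => rfl
    | succ k => rfl
  have hbf0 : bf 0 = N := rfl
  have hbfs : ∀ k, bf (k + 1) = n k + 1 := fun k => rfl
  have hnb : ∀ k, n k = s4pick x c (s k) (bf k) := by
    intro k; cases k with
    | zero => rfl
    | succ k => rfl
  clear hndef hsdef hbfdef
  clear_value n s bf
  -- positivity of remainders and the basic pick bounds
  have hspos : ∀ k, 0 < s k := by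
    intro k
    induction k with
    | zero => rw [hs0]; exact hℓ
    | succ k ih =>
      have h1 := (s4pick_spec (hex (s k) ih (bf k))).2
      rw [← hnb k] at h1
      rw [hsucc k]
      nlinarith
  have hspec : ∀ k, bf k ≤ n k ∧ x (n k) ≤ c * s k := by
    intro k
    have := s4pick_spec (hex (s k) (hspos k) (bf k))
    rwa [← hnb k] at this
  have hmin : ∀ k, ∀ m, bf k ≤ m → m < n k → c * s k < x m := by
    intro k m h1 h2
    rw [hnb k] at h2
    exact s4pick_min (hex (s k) (hspos k) (bf k)) h1 h2
  have hxs : ∀ k, x (n k) ≤ c * s k := fun k => (hspec k).2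
  have hsmono : ∀ k, s (k + 1) ≤ s k := by
    intro k; rw [hsucc k]; linarith [(hpos (n k)).le]
  -- strict monotonicity
  have hmono : StrictMono n := by
    apply strictMono_nat_of_lt_succ
    intro k
    have := (hspec (k + 1)).1
    rw [hbfs k] at this
    omega
  -- all indices are ≥ N
  have hNn : ∀ k, N ≤ n k := by
    intro k
    induction k with
    | zero => rw [← hbf0]; exact (hspec 0).1
    | succ k ih =>
      have := (hspec (k + 1)).1
      rw [hbfs k] at this
      omega
  have hNbf : ∀ k, N ≤ bf k := by
    intro k; cases k with
    | zero => rw [hbf0]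
    | succ k => rw [hbfs k]; exact le_trans (hNn k) (Nat.le_succ _)
  -- a step is "good" if the picked term is a big chunk of the remainder
  -- not-good ⇒ the pick was at the lower bound
  have hng : ∀ k, ¬ (c ^ 2 * s k ≤ x (n k)) → n k = bf k := by
    intro k hk
    by_contra hne
    have hlt : bf k < n k := lt_of_le_of_ne (hspec k).1 (Ne.symm hne)
    obtain ⟨m, hm⟩ : ∃ m, n k = m + 1 := ⟨n k - 1, by omega⟩
    have hbm : bf k ≤ m := by omega
    have h1 : c * s k < x m := hmin k m hbm (by omega)
    have h2 : c * x m < x (m + 1) := hN m (le_trans (hNbf k) hbm)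
    rw [← hm] at h2
    apply hk
    calc c ^ 2 * s k = c * (c * s k) := by ring
    _ ≤ c * x m := by nlinarith
    _ ≤ x (n k) := h2.le
  -- good propagates
  have hprop : ∀ k, c ^ 2 * s k ≤ x (n k) → c ^ 2 * s (k + 1) ≤ x (n (k + 1)) := by
    intro k hk
    have hs1 : s (k + 1) = s k - x (n k) := hsucc k
    have hsk := hspos k
    have hsk1 := hspos (k + 1)
    -- x (n k + 1) is too big to be picked at step k+1
    have hr : c * x (n k) < x (n k + 1) := hN (n k) (hNn k)
    have hbig : c * s (k + 1) < x (n k + 1) := by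
      nlinarith [hr, hk, mul_pos hcpos hsk, hc2,
        mul_le_mul_of_nonneg_left hk hcpos.le]
    have hne : n (k + 1) ≠ n k + 1 := by
      intro he
      have := hxs (k + 1)
      rw [he] at this
      linarith
    have hlt : n k + 1 < n (k + 1) := by
      have := (hspec (k + 1)).1
      rw [hbfs k] at this
      omega
    obtain ⟨m, hm⟩ : ∃ m, n (k + 1) = m + 1 := ⟨n (k + 1) - 1, by omega⟩
    have hbm : bf (k + 1) ≤ m := by rw [hbfs k]; omega
    have h1 : c * s (k + 1) < x m := hmin (k + 1) m hbm (by omega)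
    have h2 : c * x m < x (m + 1) := hN m (le_trans (hNbf (k + 1)) hbm)
    rw [← hm] at h2
    calc c ^ 2 * s (k + 1) = c * (c * s (k + 1)) := by ring
    _ ≤ c * x m := by nlinarith
    _ ≤ x (n (k + 1)) := h2.le
  -- partial sums
  have hpartial : ∀ K, ∑ j ∈ Finset.range K, x (n j) = ℓ - s K := by
    intro K
    induction K with
    | zero => simp [hs0]
    | succ K ih => rw [Finset.sum_range_succ, ih, hsucc K]; ring
  -- there is a good step
  obtain ⟨k1, hk1⟩ : ∃ k, c ^ 2 * s k ≤ x (n k) := by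
    by_contra hbad
    push_neg at hbad
    have heq : ∀ k, n k = n 0 + k := by
      intro k
      induction k with
      | zero => rfl
      | succ k ih =>
        have := hng (k + 1) (not_le.mpr (hbad (k + 1)))
        rw [this, hbfs k, ih]; omega
    have hsum : Summable (fun j => x (j + n 0)) := by
      apply summable_of_sum_range_le (c := ℓ) (fun j => (hpos _).le)
      intro K
      have : ∑ j ∈ Finset.range K, x (j + n 0) = ∑ j ∈ Finset.range K, x (n j) := by
        apply Finset.sum_congr rfl
        intro j _
        rw [heq j, Nat.add_comm]
      rw [this, hpartial K]
      linarith [hspos K]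
    exact hdiv ((summable_nat_add_iff (n 0)).mp hsum)
  -- from k1 on, all steps are good, so the remainder contracts
  have hgood : ∀ j, c ^ 2 * s (k1 + j) ≤ x (n (k1 + j)) := by
    intro j
    induction j with
    | zero => exact hk1
    | succ j ih => exact hprop (k1 + j) ih
  have hcontr : ∀ j, s (k1 + j) ≤ s k1 * q ^ j := by
    intro j
    induction j with
    | zero => simp
    | succ j ih =>
      have h1 : s (k1 + j + 1) = s (k1 + j) - x (n (k1 + j)) := hsucc (k1 + j)
      have h2 := hgood j
      have h3 : s (k1 + j + 1) ≤ q * s (k1 + j) := by rw [hqdef]; nlinarith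
      calc s (k1 + (j + 1)) = s (k1 + j + 1) := by ring_nf
      _ ≤ q * s (k1 + j) := h3
      _ ≤ q * (s k1 * q ^ j) := mul_le_mul_of_nonneg_left ih hq0
      _ = s k1 * q ^ (j + 1) := by ring
  -- remainder tends to 0
  have hstend : Tendsto s atTop (𝓝 0) := by
    have hup : Tendsto (fun k => s k1 * q ^ (k - k1)) atTop (𝓝 0) := by
      have h1 : Tendsto (fun k : ℕ => q ^ (k - k1)) atTop (𝓝 0) :=
        (tendsto_pow_atTop_nhds_zero_of_lt_one hq0 hq1).comp (tendsto_sub_atTop_nat k1)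
      simpa using h1.const_mul (s k1)
    apply tendsto_of_tendsto_of_tendsto_of_le_of_le' tendsto_const_nhds hup
    · exact Eventually.of_forall fun k => (hspos k).le
    · filter_upwards [eventually_ge_atTop k1] with k hk
      have := hcontr (k - k1)
      rwa [Nat.add_sub_cancel' hk] at this
  -- the sum
  have hptend : Tendsto (fun K => ∑ j ∈ Finset.range K, x (n j)) atTop (𝓝 ℓ) := by
    have : Tendsto (fun K => ℓ - s K) atTop (𝓝 (ℓ - 0)) := tendsto_const_nhds.sub hstend
    rw [sub_zero] at this
    simpa only [hpartial] using this
  have hsummable : Summable (fun k => x (n k)) := by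
    apply summable_of_sum_range_le (c := ℓ) (fun j => (hpos _).le)
    intro K
    rw [hpartial K]
    linarith [hspos K]
  have hhassum : HasSum (fun k => x (n k)) ℓ := by
    have h1 := hsummable.hasSum
    have h2 := h1.tendsto_sum_nat
    have h3 : ∑' k, x (n k) = ℓ := tendsto_nhds_unique h2 hptend
    rwa [h3] at h1
  -- the big-O bound
  set C : ℝ := (∑ j ∈ Finset.range (k1 + 1), x (n j) / θ ^ j) + s k1 / θ ^ k1 with hCdef
  have hterm : ∀ j, 0 ≤ x (n j) / θ ^ j := fun j => div_nonneg (hpos _).le (by positivity)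
  have hslast : 0 ≤ s k1 / θ ^ k1 := div_nonneg (hspos k1).le (by positivity)
  clear_value C
  refine ⟨n, hmono, hhassum, C, ?_⟩
  intro k
  rcases le_or_gt k k1 with hk | hk
  · have h1 : x (n k) / θ ^ k ≤ C := by
      rw [hCdef]
      have := Finset.single_le_sum (f := fun j => x (n j) / θ ^ j)
        (fun j _ => hterm j) (Finset.mem_range.mpr (by omega : k < k1 + 1))
      linarith
    calc x (n k) = x (n k) / θ ^ k * θ ^ k :=
          (div_mul_cancel₀ _ (pow_ne_zero k (ne_of_gt hθ))).symm
    _ ≤ C * θ ^ k := mul_le_mul_of_nonneg_right h1 (by positivity)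
  · have h1 : x (n k) ≤ s k := by nlinarith [hxs k, hspos k]
    have h2 : s k ≤ s k1 * q ^ (k - k1) := by
      have := hcontr (k - k1)
      rwa [Nat.add_sub_cancel' hk.le] at this
    have h3 : q ^ (k - k1) ≤ θ ^ (k - k1) := pow_le_pow_left₀ hq0 hqθ _
    have hpow : (θ:ℝ) ^ k = θ ^ k1 * θ ^ (k - k1) := by
      rw [← pow_add, Nat.add_sub_cancel' hk.le]
    have h4 : s k1 * θ ^ (k - k1) = s k1 / θ ^ k1 * θ ^ k := by
      rw [hpow, ← mul_assoc, div_mul_cancel₀ _ (pow_ne_zero k1 (ne_of_gt hθ))]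
    have h5 : s k1 / θ ^ k1 ≤ C := by
      rw [hCdef]
      have : 0 ≤ ∑ j ∈ Finset.range (k1 + 1), x (n j) / θ ^ j :=
        Finset.sum_nonneg fun j _ => hterm j
      linarith
    have h6 : x (n k) ≤ s k1 * θ ^ (k - k1) := by
      nlinarith [h1, h2, mul_le_mul_of_nonneg_left h3 (hspos k1).le]
    have h7 : s k1 / θ ^ k1 * θ ^ k ≤ C * θ ^ k :=
      mul_le_mul_of_nonneg_right h5 (by positivity)
    linarith [h4, h6, h7]
end

section
/- Let (x_n) be a positive nonincreasing real sequence with ∑_n x_n = +∞, lim_{n→∞} x_n = 0, and liminf_{n→∞} x_{n+1}/x_n > 1/2. Then for each ℓ > 0 there exists a subsequence (x_{n_k}) with ∑_k x_{n_k} = ℓ and ∑_k x_{n_k}^α < ∞ for all α > 0. -/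
open Filter Topology

open scoped Classical in
noncomputable def stepA (x : ℕ → ℝ)
    (hex : ∀ (m : ℕ) (r : ℝ), 0 < r → ∃ n, m < n ∧ x n < r)
    (p : ℕ × {r : ℝ // 0 < r}) : ℕ × {r : ℝ // 0 < r} :=
  ⟨Nat.find (hex p.1 p.2.1 p.2.2),
   ⟨p.2.1 - x (Nat.find (hex p.1 p.2.1 p.2.2)),
    sub_pos.2 (Nat.find_spec (hex p.1 p.2.1 p.2.2)).2⟩⟩

open scoped Classical in
theorem stepA_spec (x : ℕ → ℝ)
    (hex : ∀ (m : ℕ) (r : ℝ), 0 < r → ∃ n, m < n ∧ x n < r)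
    (p : ℕ × {r : ℝ // 0 < r}) :
    p.1 < (stepA x hex p).1 ∧ x (stepA x hex p).1 < p.2.1 ∧
    ((stepA x hex p).2 : ℝ) = p.2.1 - x (stepA x hex p).1 ∧
    ∀ m, p.1 < m → m < (stepA x hex p).1 → p.2.1 ≤ x m := by
  refine ⟨(Nat.find_spec (hex p.1 p.2.1 p.2.2)).1,
    (Nat.find_spec (hex p.1 p.2.1 p.2.2)).2, rfl, ?_⟩
  intro m hm1 hm2
  by_contra h
  exact (Nat.find_min (hex p.1 p.2.1 p.2.2) hm2) ⟨hm1, lt_of_not_ge h⟩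

set_option maxHeartbeats 1600000 in
theorem stmt_5 (x : ℕ → ℝ) (hpos : ∀ n, 0 < x n) (hanti : Antitone x)
    (hdiv : ¬ Summable x) (hlim : Tendsto x atTop (𝓝 0))
    (hliminf : (1 : ℝ) / 2 < liminf (fun n => x (n + 1) / x n) atTop) :
    ∀ ℓ : ℝ, 0 < ℓ → ∃ n : ℕ → ℕ, StrictMono n ∧
      HasSum (fun k => x (n k)) ℓ ∧
      ∀ α : ℝ, 0 < α → Summable (fun k => x (n k) ^ α) := by
  intro ℓ hl
  -- ratio constant
  obtain ⟨c, hc12, hcl⟩ := exists_between hliminf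
  have hbdd : IsBoundedUnder (· ≥ ·) atTop (fun n => x (n + 1) / x n) :=
    Filter.isBoundedUnder_of ⟨0, fun m => div_nonneg (hpos _).le (hpos _).le⟩
  have hratio : ∀ᶠ m in atTop, c < x (m + 1) / x m :=
    eventually_lt_of_lt_liminf hcl hbdd
  obtain ⟨N₀, hN₀⟩ := eventually_atTop.1 hratio
  have hc0 : 0 < c := lt_trans (by norm_num) hc12
  have hc1 : c ≤ 1 := by
    have h1 := hN₀ N₀ le_rfl
    have h2 : x (N₀ + 1) / x N₀ ≤ 1 :=
      div_le_one_of_le₀ (hanti (Nat.le_succ N₀)) (hpos N₀).le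
    linarith
  have hrat : ∀ m, N₀ ≤ m → c * x m ≤ x (m + 1) := by
    intro m hm
    exact ((lt_div_iff₀ (hpos m)).1 (hN₀ m hm)).le
  -- existence of small terms
  have hex : ∀ (m : ℕ) (r : ℝ), 0 < r → ∃ n, m < n ∧ x n < r := by
    intro m r hr
    obtain ⟨N, hN⟩ := eventually_atTop.1 (hlim.eventually_lt_const hr)
    exact ⟨max (m + 1) N, lt_of_lt_of_le (Nat.lt_succ_self m) (le_max_left _ _),
      hN _ (le_max_right _ _)⟩
  -- the greedy sequence
  set s : ℕ → ℕ × {r : ℝ // 0 < r} :=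
    fun k => (stepA x hex)^[k + 1] (N₀, ⟨ℓ, hl⟩) with hs_def
  set n : ℕ → ℕ := fun k => (s k).1 with hn_def
  set R : ℕ → ℝ := fun k => ((s k).2 : ℝ) with hR_def
  have hRpos : ∀ k, 0 < R k := fun k => (s k).2.2
  have hs_succ : ∀ k, s (k + 1) = stepA x hex (s k) := by
    intro k
    simp only [hs_def, Function.iterate_succ_apply']
  have hs0 : s 0 = stepA x hex (N₀, ⟨ℓ, hl⟩) := rfl
  have hmono : ∀ k, n k < n (k + 1) := by
    intro k
    have := (stepA_spec x hex (s k)).1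
    rw [← hs_succ k] at this
    exact this
  have hlt : ∀ k, x (n (k + 1)) < R k := by
    intro k
    have := (stepA_spec x hex (s k)).2.1
    rw [← hs_succ k] at this
    exact this
  have hRrec : ∀ k, R (k + 1) = R k - x (n (k + 1)) := by
    intro k
    have := (stepA_spec x hex (s k)).2.2.1
    rw [← hs_succ k] at this
    exact this
  have hmin : ∀ k m, n k < m → m < n (k + 1) → R k ≤ x m := by
    intro k m h1 h2
    have := (stepA_spec x hex (s k)).2.2.2 m h1
    rw [← hs_succ k] at this
    exact this h2
  have hn0 : N₀ < n 0 := (stepA_spec x hex (N₀, ⟨ℓ, hl⟩)).1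
  have hR0 : R 0 = ℓ - x (n 0) := (stepA_spec x hex (N₀, ⟨ℓ, hl⟩)).2.2.1
  have hsm : StrictMono n := strictMono_nat_of_lt_succ hmono
  have hnN : ∀ k, N₀ < n k := fun k => lt_of_lt_of_le hn0 (hsm.monotone (Nat.zero_le k))
  -- partial sums
  have hsum_eq : ∀ k, ∑ j ∈ Finset.range (k + 1), x (n j) = ℓ - R k := by
    intro k
    induction k with
    | zero => simp [hR0]
    | succ k ih =>
      rw [Finset.sum_range_succ, ih, hRrec]
      ring
  have hsum_le : ∀ m, ∑ j ∈ Finset.range m, x (n j) ≤ ℓ := by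
    intro m
    cases m with
    | zero => simpa using hl.le
    | succ k => rw [hsum_eq k]; linarith [hRpos k]
  -- gap lemma
  have hgap : ∀ k, n k + 1 < n (k + 1) → c * R k ≤ x (n (k + 1)) := by
    intro k hk
    have hm1 : R k ≤ x (n (k + 1) - 1) := hmin k _ (by omega) (by omega)
    have hm2 : c * x (n (k + 1) - 1) ≤ x (n (k + 1) - 1 + 1) :=
      hrat _ (by have := hnN k; omega)
    rw [show n (k + 1) - 1 + 1 = n (k + 1) from by omega] at hm2
    calc c * R k ≤ c * x (n (k + 1) - 1) := by nlinarith
      _ ≤ x (n (k + 1)) := hm2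
  -- invariant propagation
  have hstep : ∀ k, c * R k ≤ x (n (k + 1)) → c * R (k + 1) ≤ x (n (k + 2)) := by
    intro k hP
    rcases lt_or_eq_of_le (Nat.succ_le_of_lt (hmono (k + 1))) with hgt | heq
    · exact hgap (k + 1) hgt
    · have hc' : c * x (n (k + 1)) ≤ x (n (k + 1) + 1) := hrat _ (le_of_lt (hnN (k + 1)))
      have heq' : n (k + 1) + 1 = n (k + 2) := heq
      rw [heq'] at hc'
      have h1 : R (k + 1) = R k - x (n (k + 1)) := hRrec k
      nlinarith [hRpos k, hpos (n (k + 1)), hpos (n (k + 2))]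
  -- there is a gap somewhere
  have hPex : ∃ K, c * R K ≤ x (n (K + 1)) := by
    by_contra h
    push_neg at h
    have hcons : ∀ k, n (k + 1) = n k + 1 := by
      intro k
      rcases lt_or_eq_of_le (Nat.succ_le_of_lt (hmono k)) with hgt | heq
      · exact absurd (hgap k hgt) (not_le.2 (h k))
      · omega
    have hnval : ∀ k, n k = n 0 + k := by
      intro k
      induction k with
      | zero => rfl
      | succ k ih => rw [hcons k, ih]; omega
    have hsummable : Summable (fun j => x (j + n 0)) := by
      apply summable_of_sum_range_le (fun j => (hpos _).le)
      intro m
      have : ∀ j, x (j + n 0) = x (n j) := by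
        intro j; rw [hnval j, Nat.add_comm]
      calc ∑ j ∈ Finset.range m, x (j + n 0)
          = ∑ j ∈ Finset.range m, x (n j) := Finset.sum_congr rfl (fun j _ => this j)
        _ ≤ ℓ := hsum_le m
    exact hdiv ((summable_nat_add_iff (n 0)).1 hsummable)
  obtain ⟨K, hK⟩ := hPex
  have hPall : ∀ j, c * R (K + j) ≤ x (n (K + j + 1)) := by
    intro j
    induction j with
    | zero => exact hK
    | succ j ih =>
      have := hstep (K + j) ih
      rw [show K + (j + 1) = K + j + 1 from by omega]
      exact this
  have hq0 : 0 ≤ 1 - c := by linarith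
  have hq1 : 1 - c < 1 := by linarith
  have hRdec : ∀ j, R (K + j) ≤ (1 - c) ^ j * R K := by
    intro j
    induction j with
    | zero => simp
    | succ j ih =>
      have h1 : R (K + j + 1) = R (K + j) - x (n (K + j + 1)) := hRrec (K + j)
      have h2 := hPall j
      have : R (K + (j + 1)) ≤ (1 - c) * R (K + j) := by
        rw [show K + (j + 1) = K + j + 1 from by omega, h1]; linarith
      calc R (K + (j + 1)) ≤ (1 - c) * R (K + j) := this
        _ ≤ (1 - c) * ((1 - c) ^ j * R K) := by nlinarith [hRpos (K + j)]
        _ = (1 - c) ^ (j + 1) * R K := by ring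
  have hxle : ∀ j, x (n (K + 1 + j)) ≤ (1 - c) ^ j * R K := by
    intro j
    have h1 : x (n (K + j + 1)) < R (K + j) := hlt (K + j)
    rw [show K + 1 + j = K + j + 1 from by omega]
    exact le_trans h1.le (hRdec j)
  -- R tends to 0
  have hRto : Tendsto R atTop (𝓝 0) := by
    rw [← tendsto_add_atTop_iff_nat K]
    have hg : Tendsto (fun j => (1 - c) ^ j * R K) atTop (𝓝 0) := by
      simpa using (tendsto_pow_atTop_nhds_zero_of_lt_one hq0 hq1).mul_const (R K)
    apply squeeze_zero (fun j => (hRpos _).le) (fun j => ?_) hg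
    rw [Nat.add_comm]
    exact hRdec j
  -- HasSum
  have hTS : Tendsto (fun m => ∑ j ∈ Finset.range m, x (n j)) atTop (𝓝 ℓ) := by
    rw [← tendsto_add_atTop_iff_nat 1]
    have : (fun m => ∑ j ∈ Finset.range (m + 1), x (n j)) = fun m => ℓ - R m :=
      funext hsum_eq
    rw [this]
    simpa using tendsto_const_nhds.sub hRto
  have hsummable : Summable (fun k => x (n k)) :=
    summable_of_sum_range_le (fun k => (hpos _).le) hsum_le
  have htsum : HasSum (fun k => x (n k)) ℓ := by
    have h1 := hsummable.hasSum
    have h2 := h1.tendsto_sum_nat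
    rwa [tendsto_nhds_unique h2 hTS] at h1
  refine ⟨n, hsm, htsum, ?_⟩
  -- summability of powers
  intro α hα
  rw [← summable_nat_add_iff (K + 1)]
  have hqa0 : (0 : ℝ) ≤ (1 - c) ^ α := Real.rpow_nonneg hq0 α
  have hqa1 : (1 - c) ^ α < 1 := by
    rcases eq_or_lt_of_le hq0 with h0 | h0
    · rw [← h0, Real.zero_rpow hα.ne']; norm_num
    · exact Real.rpow_lt_one hq0 hq1 hα
  refine Summable.of_nonneg_of_le (fun j => Real.rpow_nonneg (hpos _).le α)
    (fun j => ?_) ((summable_geometric_of_lt_one hqa0 hqa1).mul_right ((R K) ^ α))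
  · have h1 : x (n (j + (K + 1))) ≤ (1 - c) ^ j * R K := by
      rw [Nat.add_comm]; exact hxle j
    calc x (n (j + (K + 1))) ^ α ≤ ((1 - c) ^ j * R K) ^ α :=
          Real.rpow_le_rpow (hpos _).le h1 hα.le
      _ = ((1 - c) ^ j) ^ α * (R K) ^ α :=
          Real.mul_rpow (pow_nonneg hq0 j) (hRpos K).le
      _ = ((1 - c) ^ α) ^ j * (R K) ^ α := by
          rw [← Real.rpow_natCast ((1 - c) ^ α) j, ← Real.rpow_natCast (1 - c) j,
            ← Real.rpow_mul hq0, ← Real.rpow_mul hq0, mul_comm (α) (j:ℝ)]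
end

section
/- Let (x_n) be a positive sequence with lim x_n = 0, and for ℓ > 0 define the greedy block construction: a_1 is the least index a with x_a < ℓ; b_n is the greatest b ≥ a_n with ∑_{j=a_n}^{b} x_j < ℓ − ∑_{i<n} S_i, where S_i := ∑_{j=a_i}^{b_i} x_j; and a_{n+1} is the least a > b_n with x_a < ℓ − ∑_{i≤n} S_i. If ∑_n x_n = +∞ and (x_n) is nonincreasing, then 0 ≤ ℓ − ∑_{i=1}^{n} S_i ≤ x_{b_n + 1} for all n, and consequently the subseries formed by the union of blocks [a_n, b_n] sums to ℓ. -/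
open Filter Topology

set_option maxHeartbeats 1000000

theorem stmt_7 (x : ℕ → ℝ) (hpos : ∀ n, 0 < x n) (hanti : Antitone x)
    (hdiv : ¬ Summable x) (hlim : Tendsto x atTop (𝓝 0))
    (ℓ : ℝ) (hℓ : 0 < ℓ) (a b : ℕ → ℕ) (S : ℕ → ℝ)
    (hS : ∀ n, S n = ∑ j ∈ Finset.Icc (a n) (b n), x j)
    (ha0 : IsLeast {m | x m < ℓ} (a 0))
    (hb : ∀ n, IsGreatest
        {m | a n ≤ m ∧ ∑ j ∈ Finset.Icc (a n) m, x j < ℓ - ∑ i ∈ Finset.range n, S i} (b n))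
    (ha : ∀ n, IsLeast
        {m | b n < m ∧ x m < ℓ - ∑ i ∈ Finset.range (n + 1), S i} (a (n + 1))) :
    (∀ n, 0 ≤ ℓ - ∑ i ∈ Finset.range (n + 1), S i ∧
        ℓ - ∑ i ∈ Finset.range (n + 1), S i ≤ x (b n + 1)) ∧
    HasSum (fun j : ↥(⋃ n, Set.Icc (a n) (b n)) => x (j : ℕ)) ℓ := by
  classical
  set T : ℕ → ℝ := fun n => ∑ i ∈ Finset.range (n + 1), S i with hTdef
  have hab : ∀ n, a n ≤ b n := fun n => (hb n).1.1
  have hba : ∀ n, b n < a (n + 1) := fun n => (ha n).1.1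
  have haS : StrictMono a :=
    strictMono_nat_of_lt_succ (fun n => lt_of_le_of_lt (hab n) (hba n))
  have hbij : ∀ i j, i < j → b i < a j := by
    intro i j hij
    exact lt_of_lt_of_le (hba i) (haS.monotone (Nat.succ_le_of_lt hij))
  -- Part 1
  have hTlt : ∀ n, T n < ℓ := by
    intro n
    have h1 := (hb n).1.2
    rw [← hS n] at h1
    have : T n = ∑ i ∈ Finset.range n, S i + S n := Finset.sum_range_succ S n
    linarith
  have hTge : ∀ n, ℓ - T n ≤ x (b n + 1) := by
    intro n
    by_contra h
    push_neg at h
    have hmem : b n + 1 ∈ {m | a n ≤ m ∧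
        ∑ j ∈ Finset.Icc (a n) m, x j < ℓ - ∑ i ∈ Finset.range n, S i} := by
      constructor
      · exact le_trans (hab n) (Nat.le_succ _)
      · rw [Finset.sum_Icc_succ_top (le_trans (hab n) (Nat.le_succ _))]
        have h2 : T n = ∑ i ∈ Finset.range n, S i + S n := Finset.sum_range_succ S n
        rw [hS n] at h2
        linarith
    have := (hb n).2 hmem
    omega
  have part1 : ∀ n, 0 ≤ ℓ - ∑ i ∈ Finset.range (n + 1), S i ∧
      ℓ - ∑ i ∈ Finset.range (n + 1), S i ≤ x (b n + 1) :=
    fun n => ⟨le_of_lt (sub_pos.mpr (hTlt n)), hTge n⟩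
  refine ⟨part1, ?_⟩
  -- convergence of T to ℓ
  have hbS : StrictMono b :=
    strictMono_nat_of_lt_succ (fun n => lt_of_lt_of_le (hba n) (hab (n + 1)))
  have hbtop : Tendsto (fun n => b n + 1) atTop atTop := by
    apply tendsto_atTop_atTop.mpr
    intro k
    exact ⟨k, fun n hn => le_trans (le_trans hn hbS.le_apply) (Nat.le_succ _)⟩
  have hx0 : Tendsto (fun n => x (b n + 1)) atTop (𝓝 0) := hlim.comp hbtop
  have hsq : Tendsto (fun n => ℓ - T n) atTop (𝓝 0) :=
    tendsto_of_tendsto_of_tendsto_of_le_of_le tendsto_const_nhds hx0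
      (fun n => (part1 n).1) (fun n => (part1 n).2)
  have hTtend : Tendsto T atTop (𝓝 ℓ) := by
    have h : Tendsto (fun n => ℓ - (ℓ - T n)) atTop (𝓝 (ℓ - 0)) :=
      tendsto_const_nhds.sub hsq
    simpa using h
  -- block finsets
  set s : Set ℕ := ⋃ n, Set.Icc (a n) (b n) with hsdef
  set B : ℕ → Finset ℕ := fun N => (Finset.range (N + 1)).biUnion
      (fun i => Finset.Icc (a i) (b i)) with hBdef
  have hBsum : ∀ N, ∑ j ∈ B N, x j = T N := by
    intro N
    rw [Finset.sum_biUnion]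
    · exact (Finset.sum_congr rfl (fun i _ => (hS i).symm))
    · intro i _ j _ hij
      rcases lt_or_gt_of_ne hij with h | h
      · refine Finset.disjoint_left.mpr (fun m hm hm' => ?_)
        simp only [Finset.mem_Icc] at hm hm'
        have := hbij i j h
        omega
      · refine Finset.disjoint_left.mpr (fun m hm hm' => ?_)
        simp only [Finset.mem_Icc] at hm hm'
        have := hbij j i h
        omega
  have hBs : ∀ N, ∀ m ∈ B N, m ∈ s := by
    intro N m hm
    simp only [hBdef, Finset.mem_biUnion, Finset.mem_range, Finset.mem_Icc] at hm
    obtain ⟨i, _, hi⟩ := hm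
    exact Set.mem_iUnion.mpr ⟨i, by simpa [Set.mem_Icc] using hi⟩
  have hmemB : ∀ m ∈ s, ∀ M, m ≤ M → m ∈ B M := by
    intro m hm M hM
    obtain ⟨n, hn⟩ := Set.mem_iUnion.mp hm
    simp only [Set.mem_Icc] at hn
    have hnm : n ≤ m := le_trans (haS.le_apply) hn.1
    simp only [hBdef, Finset.mem_biUnion, Finset.mem_range, Finset.mem_Icc]
    exact ⟨n, by omega, hn⟩
  -- LUB argument
  apply hasSum_of_isLUB_of_nonneg ℓ (fun i => (hpos _).le)
  constructor
  · rintro r ⟨F, rfl⟩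
    set G : Finset ℕ := F.image Subtype.val with hGdef
    have hsum : ∑ i ∈ F, x (i : ℕ) = ∑ j ∈ G, x j :=
      (Finset.sum_image (fun p _ q _ h => Subtype.val_injective h)).symm
    set M : ℕ := G.sup id with hMdef
    have hGB : G ⊆ B M := by
      intro m hm
      refine hmemB m ?_ M (Finset.le_sup (f := id) hm)
      simp only [hGdef, Finset.mem_image] at hm
      obtain ⟨⟨p, hp⟩, _, rfl⟩ := hm
      exact hp
    calc ∑ i ∈ F, x (i : ℕ) = ∑ j ∈ G, x j := hsum
      _ ≤ ∑ j ∈ B M, x j :=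
          Finset.sum_le_sum_of_subset_of_nonneg hGB (fun j _ _ => (hpos j).le)
      _ = T M := hBsum M
      _ ≤ ℓ := (hTlt M).le
  · intro c hc
    refine le_of_tendsto hTtend (Eventually.of_forall (fun N => ?_))
    have hmem : T N ∈ Set.range fun (F : Finset ↥s) => ∑ i ∈ F, x (i : ℕ) := by
      refine ⟨(B N).subtype (· ∈ s), ?_⟩
      show ∑ i ∈ (B N).subtype (· ∈ s), x (i : ℕ) = T N
      rw [Finset.sum_subtype_eq_sum_filter]
      rw [Finset.filter_true_of_mem (hBs N)]
      exact hBsum N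
    exact hc hmem
end

section
/- With the greedy block construction for target ℓ > 0 applied to a positive nonincreasing null sequence (x_n) with divergent series, suppose x_{n+1} ≥ L̃·x_n for all n ≥ N where L̃ > 1/2. Then for all large n, κ_{n+1}·x_{b_{n+1}} ≤ S_{n+1} < x_{a_n − 1} − S_n ≤ (1 − L̃)·x_{b_{n−1}}, and consequently x_{b_n} = O((1 − L̃)^{n/2}). -/
open Filter Topology

theorem stmt_9 (x : ℕ → ℝ) (hpos : ∀ n, 0 < x n) (hanti : Antitone x)
    (hdiv : ¬ Summable x) (hlim : Tendsto x atTop (𝓝 0))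
    (ℓ : ℝ) (hℓ : 0 < ℓ) (a b : ℕ → ℕ) (S : ℕ → ℝ)
    (hS : ∀ n, S n = ∑ j ∈ Finset.Icc (a n) (b n), x j)
    (ha0 : IsLeast {m | x m < ℓ} (a 0))
    (hb : ∀ n, IsGreatest
        {m | a n ≤ m ∧ ∑ j ∈ Finset.Icc (a n) m, x j < ℓ - ∑ i ∈ Finset.range n, S i} (b n))
    (ha : ∀ n, IsLeast
        {m | b n < m ∧ x m < ℓ - ∑ i ∈ Finset.range (n + 1), S i} (a (n + 1)))
    (L : ℝ) (hL : (1 : ℝ) / 2 < L) (N : ℕ)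
    (hratio : ∀ n, N ≤ n → L * x n ≤ x (n + 1)) :
    (∀ᶠ n in atTop,
        ((b (n + 1) - a (n + 1) + 1 : ℕ) : ℝ) * x (b (n + 1)) ≤ S (n + 1) ∧
        S (n + 1) < x (a n - 1) - S n ∧
        x (a n - 1) - S n ≤ (1 - L) * x (b (n - 1))) ∧
    ∃ C : ℝ, ∀ n, x (b n) ≤ C * (1 - L) ^ ((n : ℝ) / 2) := by
  -- first, L < 1
  have hL1 : L < 1 := by
    by_contra h
    push_neg at h
    have hconst : ∀ n, N ≤ n → x n = x N := by
      intro n hn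
      induction n, hn using Nat.le_induction with
      | base => rfl
      | succ k hk ih =>
        have h1 : x (k + 1) ≤ x k := hanti (Nat.le_succ k)
        have h2 : L * x k ≤ x (k + 1) := hratio k hk
        nlinarith [hpos k, ih]
    have hten : Tendsto (fun _ : ℕ => x N) atTop (𝓝 0) :=
      hlim.congr' (by filter_upwards [eventually_ge_atTop N] with n hn using hconst n hn)
    have := tendsto_nhds_unique hten tendsto_const_nhds
    have := hpos N
    linarith
  have hlampos : 0 < 1 - L := by linarith
  have hlamlt : 1 - L < 1 := by linarith
  set r : ℕ → ℝ := fun n => ℓ - ∑ i ∈ Finset.range n, S i with hr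
  have hrS : ∀ n, r (n + 1) = r n - S n := by
    intro n
    simp only [hr, Finset.sum_range_succ]
    ring
  have hab : ∀ n, a n ≤ b n := fun n => (hb n).1.1
  have hSr : ∀ n, S n < r n := by
    intro n
    rw [hS]
    exact (hb n).1.2
  have hF2 : ∀ n, r n ≤ S n + x (b n + 1) := by
    intro n
    by_contra h
    push_neg at h
    have hmem : b n + 1 ∈ {m | a n ≤ m ∧
        ∑ j ∈ Finset.Icc (a n) m, x j < r n} := by
      refine ⟨(hab n).trans (Nat.le_succ _), ?_⟩
      rw [Finset.sum_Icc_succ_top ((hab n).trans (Nat.le_succ _)), ← hS n]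
      linarith
    have := (hb n).2 hmem
    omega
  have hA : ∀ n, r (n + 1) ≤ x (a (n + 1) - 1) := by
    intro n
    have hba : b n < a (n + 1) := (ha n).1.1
    rcases Nat.lt_or_ge (b n + 1) (a (n + 1)) with hlt | hge
    · by_contra hc
      push_neg at hc
      have hmem : a (n + 1) - 1 ∈ {m | b n < m ∧ x m < r (n + 1)} :=
        ⟨by omega, hc⟩
      have := (ha n).2 hmem
      omega
    · have he : a (n + 1) - 1 = b n := by omega
      rw [he]
      have h1 := hF2 n
      have h2 := hrS n
      have h3 : x (b n + 1) ≤ x (b n) := hanti (Nat.le_succ _)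
      linarith
  have hSax : ∀ n, x (a n) ≤ S n := by
    intro n
    rw [hS]
    exact Finset.single_le_sum (fun i _ => (hpos i).le)
      (Finset.mem_Icc.mpr ⟨le_rfl, hab n⟩)
  have hk : ∀ n, ((b n - a n + 1 : ℕ) : ℝ) * x (b n) ≤ S n := by
    intro n
    rw [hS]
    have hcard : (Finset.Icc (a n) (b n)).card = b n - a n + 1 := by
      rw [Nat.card_Icc]
      have := hab n
      omega
    calc ((b n - a n + 1 : ℕ) : ℝ) * x (b n)
        = (Finset.Icc (a n) (b n)).card • x (b n) := by
          rw [hcard, nsmul_eq_mul]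
      _ ≤ ∑ j ∈ Finset.Icc (a n) (b n), x j :=
          Finset.card_nsmul_le_sum _ _ _ (fun i hi => hanti (Finset.mem_Icc.mp hi).2)
  have han : ∀ n, n ≤ a n := by
    intro n
    induction n with
    | zero => exact Nat.zero_le _
    | succ k ih =>
      have h1 : b k < a (k + 1) := (ha k).1.1
      have h2 : a k ≤ b k := hab k
      omega
  have key : ∀ n, N + 1 ≤ n →
      ((b (n + 1) - a (n + 1) + 1 : ℕ) : ℝ) * x (b (n + 1)) ≤ S (n + 1) ∧
      S (n + 1) < x (a n - 1) - S n ∧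
      x (a n - 1) - S n ≤ (1 - L) * x (b (n - 1)) := by
    intro n hn
    obtain ⟨m, rfl⟩ : ∃ m, n = m + 1 := ⟨n - 1, by omega⟩
    refine ⟨hk (m + 1 + 1), ?_, ?_⟩
    · have h1 := hSr (m + 1 + 1)
      have h2 := hrS (m + 1)
      have h3 := hA m
      linarith
    · have hge : N ≤ a (m + 1) - 1 := by
        have := han (m + 1)
        omega
      have hone : 1 ≤ a (m + 1) := by
        have := han (m + 1)
        omega
      have h1 : L * x (a (m + 1) - 1) ≤ x (a (m + 1)) := by
        have := hratio (a (m + 1) - 1) hge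
        rwa [Nat.sub_add_cancel hone] at this
      have h2 := hSax (m + 1)
      have h3 : x (a (m + 1) - 1) ≤ x (b m) := hanti (by
        have := (ha m).1.1
        omega)
      have h4 : (1 - L) * x (a (m + 1) - 1) ≤ (1 - L) * x (b m) :=
        mul_le_mul_of_nonneg_left h3 hlampos.le
      simp only [Nat.add_sub_cancel]
      nlinarith [hpos (a (m + 1) - 1)]
  constructor
  · exact eventually_atTop.mpr ⟨N + 1, key⟩
  · have hstep : ∀ m, N ≤ m → x (b (m + 2)) ≤ (1 - L) * x (b m) := by
      intro m hm
      obtain ⟨h1, h2, h3⟩ := key (m + 1) (by omega)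
      have h4 : (1 : ℝ) ≤ ((b (m + 1 + 1) - a (m + 1 + 1) + 1 : ℕ) : ℝ) := by
        exact_mod_cast Nat.one_le_iff_ne_zero.mpr (by omega)
      have h5 : 0 < x (b (m + 1 + 1)) := hpos _
      have h6 : x (b (m + 1 + 1)) ≤ S (m + 1 + 1) := le_trans (by nlinarith) h1
      simp only [Nat.add_sub_cancel] at h3
      have : x (b (m + 1 + 1)) ≤ (1 - L) * x (b m) := by linarith
      exact this
    have hiter : ∀ p k, x (b (N + p + 2 * k)) ≤ (1 - L) ^ k * x (b (N + p)) := by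
      intro p k
      induction k with
      | zero => simp
      | succ j ih =>
        have he : N + p + 2 * (j + 1) = N + p + 2 * j + 2 := by ring
        rw [he]
        calc x (b (N + p + 2 * j + 2)) ≤ (1 - L) * x (b (N + p + 2 * j)) :=
              hstep _ (by omega)
          _ ≤ (1 - L) * ((1 - L) ^ j * x (b (N + p))) :=
              mul_le_mul_of_nonneg_left ih hlampos.le
          _ = (1 - L) ^ (j + 1) * x (b (N + p)) := by ring
    refine ⟨x 0 * (1 - L) ^ (-(((N : ℝ) + 1)) / 2), fun n => ?_⟩
    have hx0 : 0 < x 0 := hpos 0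
    have hmain : x (b n) ≤ x 0 * (1 - L) ^ (((n : ℝ) - N - 1) / 2) := by
      rcases le_or_gt N n with hn | hn
      · have he : n = N + (n - N) % 2 + 2 * ((n - N) / 2) := by omega
        have h1 := hiter ((n - N) % 2) ((n - N) / 2)
        rw [← he] at h1
        have h2 : x (b (N + (n - N) % 2)) ≤ x 0 := hanti (Nat.zero_le _)
        have h3 : ((1 - L) ^ ((n - N) / 2) : ℝ)
            ≤ (1 - L) ^ (((n : ℝ) - N - 1) / 2) := by
          rw [← Real.rpow_natCast (1 - L) ((n - N) / 2)]
          apply Real.rpow_le_rpow_of_exponent_ge hlampos hlamlt.le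
          have hn2 : n ≤ N + 1 + 2 * ((n - N) / 2) := by omega
          have : (n : ℝ) ≤ N + 1 + 2 * (((n - N) / 2 : ℕ) : ℝ) := by
            exact_mod_cast hn2
          linarith
        calc x (b n) ≤ (1 - L) ^ ((n - N) / 2) * x (b (N + (n - N) % 2)) := h1
          _ ≤ (1 - L) ^ (((n : ℝ) - N - 1) / 2) * x 0 :=
              mul_le_mul h3 h2 (hpos _).le (Real.rpow_nonneg hlampos.le _)
          _ = x 0 * (1 - L) ^ (((n : ℝ) - N - 1) / 2) := mul_comm _ _
      · have h1 : x (b n) ≤ x 0 := hanti (Nat.zero_le _)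
        have h2 : (1 : ℝ) ≤ (1 - L) ^ (((n : ℝ) - N - 1) / 2) := by
          apply Real.one_le_rpow_of_pos_of_le_one_of_nonpos hlampos hlamlt.le
          have : (n : ℝ) < N := by exact_mod_cast hn
          linarith
        nlinarith
    have hsplit : ((1 - L) : ℝ) ^ (((n : ℝ) - N - 1) / 2)
        = (1 - L) ^ (-(((N : ℝ) + 1)) / 2) * (1 - L) ^ ((n : ℝ) / 2) := by
      rw [← Real.rpow_add hlampos]
      congr 1
      ring
    calc x (b n) ≤ x 0 * (1 - L) ^ (((n : ℝ) - N - 1) / 2) := hmain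
      _ = x 0 * (1 - L) ^ (-(((N : ℝ) + 1)) / 2) * (1 - L) ^ ((n : ℝ) / 2) := by
          rw [hsplit]; ring
end
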